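/- arXiv:2503.00970 — 4 statements merged into one kernel-verified Lean document; each statement's English description precedes it below -/
import Mathlib

section
/- Let C ⊆ ℝⁿ be a pointed n-dimensional closed convex cone, ω ⊆ Ω = S^{n-1} ∩ int C° a nonempty compact set, and f : ω → (0,∞) a continuous function. Then the Wulff shape [f] = C ∩ ⋂_{u∈ω} {y : ⟨y,u⟩ ≤ −f(u)} is a C-pseudo-cone, it satisfies [f] = C ∩ ⋂_{u∈ω} {y : ⟨y,u⟩ ≤ h_{[f]}(u)} (i.e. [f] ∈ 𝒦(C,ω)), and f(u) ≤ −h_{[f]}(u) for every u ∈ ω. -/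
/-! A point `x` with `closedBall x r ⊆ C` satisfies `⟪x, u⟫ ≤ -r` for every unit `u ∈ C°`; since
`f` is bounded on the compact `ω`, a large multiple of `x` lies in `[f]`, so `[f]` is nonempty.
The recession cone contains `C` because `⟪z, u⟫ ≤ 0` for `z ∈ C`, `u ∈ ω ⊆ C°`; conversely, if
`y + k z ∈ [f] ⊆ C` for all `k`, then `y / k + z → z` lies in `C`. Finally `h_{[f]} ≤ -f` on `ω`,
which gives both remaining claims. -/

open MeasureTheory Metric Set Filter
open scoped RealInnerProductSpace Pointwise Topology ENNReal

noncomputable section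

/-- `ℝⁿ` as Euclidean space. -/
abbrev En (n : ℕ) := EuclideanSpace ℝ (Fin n)

/-- The standard Gaussian measure of a set `A ⊆ ℝⁿ`:
`γⁿ(A) = (2π)^{-n/2} ∫_A e^{-‖x‖²/2} dx`. -/
def gaussianMeasure (n : ℕ) (A : Set (En n)) : ℝ :=
  (2 * Real.pi) ^ (-(n : ℝ) / 2) * ∫ x in A, Real.exp (-‖x‖ ^ 2 / 2)

/-- A pointed (no lines), `n`-dimensional (nonempty interior), closed convex cone. -/
def IsPointedCone {n : ℕ} (C : Set (En n)) : Prop :=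
  IsClosed C ∧ Convex ℝ C ∧ (∀ x ∈ C, ∀ c : ℝ, 0 ≤ c → c • x ∈ C) ∧
    (interior C).Nonempty ∧ ∀ x ∈ C, -x ∈ C → x = 0

/-- The polar cone `C° = {x : ⟨x,y⟩ ≤ 0 ∀ y ∈ C}`. -/
def polarCone {n : ℕ} (C : Set (En n)) : Set (En n) := {x | ∀ y ∈ C, ⟪x, y⟫ ≤ 0}

/-- `Ω = S^{n-1} ∩ int C°`. -/
def OmegaSet {n : ℕ} (C : Set (En n)) : Set (En n) :=
  sphere (0 : En n) 1 ∩ interior (polarCone C)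

/-- A pseudo-cone: nonempty closed convex set not containing the origin with `λK ⊆ K` for `λ ≥ 1`. -/
def IsPseudoCone {n : ℕ} (K : Set (En n)) : Prop :=
  K.Nonempty ∧ IsClosed K ∧ Convex ℝ K ∧ (0 : En n) ∉ K ∧
    ∀ c : ℝ, 1 ≤ c → c • K ⊆ K

/-- The recession cone `rec K = {z : K + z ⊆ K}`. -/
def recessionCone {n : ℕ} (K : Set (En n)) : Set (En n) := {z | ∀ x ∈ K, x + z ∈ K}

/-- A `C`-pseudo-cone: a pseudo-cone whose recession cone is `C`. -/
def IsCPseudoCone {n : ℕ} (C K : Set (En n)) : Prop :=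
  IsPseudoCone K ∧ recessionCone K = C

/-- The support function `h_K(u) = sup {⟨x,u⟫ : x ∈ K}`. -/
def suppFn {n : ℕ} (K : Set (En n)) (u : En n) : ℝ := sSup ((fun x => ⟪x, u⟫) '' K)

/-- The Wulff shape `[f] = C ∩ ⋂_{u ∈ ω} {y : ⟨y,u⟩ ≤ -f(u)}`. -/
def wulffShape {n : ℕ} (C ω : Set (En n)) (f : En n → ℝ) : Set (En n) :=
  C ∩ ⋂ u ∈ ω, {y | ⟪y, u⟫ ≤ -f u}

/-- `K ∈ 𝒦(C,ω)`: `K` is a `C`-pseudo-cone that is `C`-determined by `ω`. -/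
def InKClass {n : ℕ} (C ω K : Set (En n)) : Prop :=
  IsCPseudoCone C K ∧ K = C ∩ ⋂ u ∈ ω, {y | ⟪y, u⟫ ≤ suppFn K u}

end

section Cone

variable {n : ℕ} {C : Set (En n)}

theorem add_mem_of_convex_of_smul_mem (hconv : Convex ℝ C)
    (hcone : ∀ x ∈ C, ∀ c : ℝ, 0 ≤ c → c • x ∈ C) {a b : En n} (ha : a ∈ C) (hb : b ∈ C) :
    a + b ∈ C := by
  have hmid : (1 / 2 : ℝ) • a + (1 / 2 : ℝ) • b ∈ C :=
    hconv ha hb (by norm_num) (by norm_num) (by norm_num)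
  convert hcone _ hmid 2 (by norm_num) using 1
  rw [smul_add, smul_smul, smul_smul]
  norm_num

theorem inner_le_neg_of_closedBall_subset {x u : En n} {r : ℝ} (hr : 0 ≤ r)
    (hball : closedBall x r ⊆ C) (hu : u ∈ polarCone C) (hu1 : ‖u‖ = 1) : ⟪x, u⟫ ≤ -r := by
  have hmem : x + r • u ∈ C := hball <| by
    rw [mem_closedBall, dist_eq_norm, add_sub_cancel_left, norm_smul, hu1, Real.norm_of_nonneg hr,
      mul_one]
  have := hu _ hmem
  rw [inner_add_right, real_inner_smul_right, real_inner_self_eq_norm_sq, hu1, real_inner_comm]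
    at this
  linarith

theorem recessionCone_subset_of_subset (hclosed : IsClosed C)
    (hcone : ∀ x ∈ C, ∀ c : ℝ, 0 ≤ c → c • x ∈ C) {K : Set (En n)} (hK : K.Nonempty)
    (hKC : K ⊆ C) : recessionCone K ⊆ C := by
  intro z hz
  obtain ⟨y, hy⟩ := hK
  have hray : ∀ k : ℕ, y + (k : ℝ) • z ∈ K := by
    intro k
    induction k with
    | zero => simpa using hy
    | succ k ih =>
      convert hz _ ih using 1
      rw [Nat.cast_succ, add_smul, one_smul, add_assoc]
  have hscaled : ∀ k : ℕ, 1 ≤ k → (1 / (k : ℝ)) • y + z ∈ C := by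
    intro k hk
    have hk0 : (k : ℝ) ≠ 0 := Nat.cast_ne_zero.mpr (by omega)
    convert hcone _ (hKC (hray k)) (1 / (k : ℝ)) (by positivity) using 1
    rw [smul_add, smul_smul, one_div_mul_cancel hk0, one_smul]
  have hlim : Tendsto (fun k : ℕ => (1 / (k : ℝ)) • y + z) atTop (𝓝 z) := by
    simpa using ((tendsto_one_div_atTop_nhds_zero_nat (𝕜 := ℝ)).smul_const y).add_const z
  exact hclosed.mem_of_tendsto hlim <| (eventually_ge_atTop 1).mono hscaled

end Cone

section WulffShape

variable {n : ℕ} {C ω : Set (En n)} {f : En n → ℝ}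

theorem mem_wulffShape {y : En n} :
    y ∈ wulffShape C ω f ↔ y ∈ C ∧ ∀ u ∈ ω, ⟪y, u⟫ ≤ -f u := by
  simp [wulffShape]

theorem isClosed_wulffShape (hC : IsClosed C) : IsClosed (wulffShape C ω f) :=
  hC.inter <| isClosed_biInter fun _ _ =>
    isClosed_le (by fun_prop) continuous_const

theorem convex_wulffShape (hC : Convex ℝ C) : Convex ℝ (wulffShape C ω f) :=
  hC.inter <| convex_iInter₂ fun u _ =>
    convex_halfSpace_le ⟨fun x y => inner_add_left x y u, fun c x => real_inner_smul_left x u c⟩ _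

theorem zero_notMem_wulffShape {u : En n} (hu : u ∈ ω) (hfu : 0 < f u) :
    (0 : En n) ∉ wulffShape C ω f := fun h0 => by
  have := (mem_wulffShape.mp h0).2 u hu
  rw [inner_zero_left] at this
  linarith

theorem smul_wulffShape_subset (hcone : ∀ x ∈ C, ∀ c : ℝ, 0 ≤ c → c • x ∈ C)
    (hf : ∀ u ∈ ω, 0 ≤ f u) {c : ℝ} (hc : 1 ≤ c) : c • wulffShape C ω f ⊆ wulffShape C ω f := by
  rintro _ ⟨y, hy, rfl⟩
  obtain ⟨hyC, hyω⟩ := mem_wulffShape.mp hy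
  refine mem_wulffShape.mpr ⟨hcone y hyC c (by linarith), fun u hu => ?_⟩
  rw [real_inner_smul_left]
  nlinarith [hyω u hu, hf u hu]

theorem wulffShape_nonempty (hcone : ∀ x ∈ C, ∀ c : ℝ, 0 ≤ c → c • x ∈ C)
    (hint : (interior C).Nonempty) (hωC : ω ⊆ polarCone C) (hω1 : ω ⊆ sphere 0 1)
    (hbdd : BddAbove (f '' ω)) : (wulffShape C ω f).Nonempty := by
  obtain ⟨x, hx⟩ := hint
  obtain ⟨r, hr, hball⟩ := nhds_basis_closedBall.mem_iff.mp (mem_interior_iff_mem_nhds.mp hx)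
  obtain ⟨M, hM⟩ := hbdd
  set t := max M 0 / r
  refine ⟨t • x, mem_wulffShape.mpr ⟨hcone x (interior_subset hx) t (by positivity), ?_⟩⟩
  intro u hu
  have hxu : ⟪x, u⟫ ≤ -r :=
    inner_le_neg_of_closedBall_subset hr.le hball (hωC hu) (mem_sphere_zero_iff_norm.mp (hω1 hu))
  have hscale : t * ⟪x, u⟫ ≤ -max M 0 := by
    calc t * ⟪x, u⟫ ≤ t * -r := mul_le_mul_of_nonneg_left hxu (by positivity)
      _ = -max M 0 := by rw [mul_neg, div_mul_cancel₀ _ hr.ne']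
  rw [real_inner_smul_left]
  linarith [hM (mem_image_of_mem f hu), le_max_left M 0]

theorem recessionCone_wulffShape (hclosed : IsClosed C) (hconv : Convex ℝ C)
    (hcone : ∀ x ∈ C, ∀ c : ℝ, 0 ≤ c → c • x ∈ C) (hωC : ω ⊆ polarCone C)
    (hne : (wulffShape C ω f).Nonempty) : recessionCone (wulffShape C ω f) = C := by
  refine (recessionCone_subset_of_subset hclosed hcone hne inter_subset_left).antisymm ?_
  intro z hzC y hy
  obtain ⟨hyC, hyω⟩ := mem_wulffShape.mp hy
  refine mem_wulffShape.mpr ⟨add_mem_of_convex_of_smul_mem hconv hcone hyC hzC, fun u hu => ?_⟩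
  rw [inner_add_left]
  linarith [hyω u hu, real_inner_comm z u ▸ hωC hu z hzC]

theorem neg_mem_upperBounds_inner_wulffShape {u : En n} (hu : u ∈ ω) :
    -f u ∈ upperBounds ((fun y => ⟪y, u⟫) '' wulffShape C ω f) := by
  rintro _ ⟨y, hy, rfl⟩
  exact (mem_wulffShape.mp hy).2 u hu

theorem suppFn_wulffShape_le (hne : (wulffShape C ω f).Nonempty) {u : En n} (hu : u ∈ ω) :
    suppFn (wulffShape C ω f) u ≤ -f u :=
  csSup_le (hne.image _) (neg_mem_upperBounds_inner_wulffShape hu)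

theorem wulffShape_eq_inter_suppFn (hne : (wulffShape C ω f).Nonempty) :
    wulffShape C ω f = C ∩ ⋂ u ∈ ω, {y | ⟪y, u⟫ ≤ suppFn (wulffShape C ω f) u} := by
  ext y
  simp only [mem_inter_iff, mem_iInter, mem_ofPred_eq]
  constructor
  · intro hy
    exact ⟨(mem_wulffShape.mp hy).1, fun u hu =>
      le_csSup ⟨_, neg_mem_upperBounds_inner_wulffShape hu⟩ (mem_image_of_mem _ hy)⟩
  · rintro ⟨hyC, hyω⟩
    exact mem_wulffShape.mpr ⟨hyC, fun u hu => (hyω u hu).trans (suppFn_wulffShape_le hne hu)⟩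

end WulffShape

theorem wulffShape_mem_KClass_general {n : ℕ} (C : Set (En n)) (hC : IsPointedCone C)
    (ω : Set (En n)) (hω : ω.Nonempty) (hωc : IsCompact ω) (hωΩ : ω ⊆ OmegaSet C)
    (f : En n → ℝ) (hf : ContinuousOn f ω) (hfpos : ∀ u ∈ ω, 0 < f u) :
    IsCPseudoCone C (wulffShape C ω f) ∧ InKClass C ω (wulffShape C ω f) ∧
      ∀ u ∈ ω, f u ≤ -suppFn (wulffShape C ω f) u := by
  obtain ⟨hclosed, hconv, hcone, hint, -⟩ := hC
  have hωC : ω ⊆ polarCone C := fun u hu => interior_subset (hωΩ hu).2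
  have hne : (wulffShape C ω f).Nonempty :=
    wulffShape_nonempty hcone hint hωC (fun u hu => (hωΩ hu).1) (hωc.bddAbove_image hf)
  obtain ⟨u₀, hu₀⟩ := hω
  have hCP : IsCPseudoCone C (wulffShape C ω f) :=
    ⟨⟨hne, isClosed_wulffShape hclosed, convex_wulffShape hconv,
        zero_notMem_wulffShape hu₀ (hfpos u₀ hu₀),
        fun _ hc => smul_wulffShape_subset hcone (fun u hu => (hfpos u hu).le) hc⟩,
      recessionCone_wulffShape hclosed hconv hcone hωC hne⟩
  exact ⟨hCP, ⟨hCP, wulffShape_eq_inter_suppFn hne⟩,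
    fun u hu => le_neg.mpr (suppFn_wulffShape_le hne hu)⟩

/-- The Wulff shape `[f]` of a positive continuous function `f` on a nonempty compact
`ω ⊆ Ω` is a `C`-pseudo-cone, belongs to `𝒦(C,ω)`, and `f(u) ≤ -h_{[f]}(u)` on `ω`. -/
theorem wulffShape_mem_KClass {n : ℕ} (hn : 1 ≤ n) (C : Set (En n)) (hC : IsPointedCone C)
    (ω : Set (En n)) (hω : ω.Nonempty) (hωc : IsCompact ω) (hωΩ : ω ⊆ OmegaSet C)
    (f : En n → ℝ) (hf : ContinuousOn f ω) (hfpos : ∀ u ∈ ω, 0 < f u) :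
    IsCPseudoCone C (wulffShape C ω f) ∧ InKClass C ω (wulffShape C ω f) ∧
      ∀ u ∈ ω, f u ≤ -suppFn (wulffShape C ω f) u :=
  wulffShape_mem_KClass_general C hC ω hω hωc hωΩ f hf hfpos
end

section
/- Let C ⊆ ℝⁿ be a pointed n-dimensional closed convex cone, ω ⊆ Ω = S^{n-1} ∩ int C° a nonempty compact set, μ a finite Borel measure on ω, and p > 0. Let K be a C-pseudo-cone and set d = dist(0,K) > 0. Then γⁿ(K) · ∫_ω (−h_K(u))^p dμ(u) ≤ (2n√n / (√(2π) d)) · e^{-d²/(2n)} · μ(ω) · d^p. -/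
open MeasureTheory Metric Set Filter
open scoped RealInnerProductSpace Pointwise Topology ENNReal

/-! The standard Gaussian measure of `ℝⁿ` (identified with `γⁿ` through its characteristic
function) pushes forward along any unit linear functional to the one-dimensional standard
Gaussian. A closed convex `K` at distance `d > 0` from the origin lies in the half-space
`{x | d ≤ ⟪u, x⟫}` with `u = x₀ / d`, `x₀` the point of `K` nearest to the origin, so
`γⁿ(K) ≤ (2π)^{-1/2} ∫_d^∞ e^{-s²/2} ds ≤ e^{-d²/2} / (√(2π) d)`.
Since `K ⊆ C` and `ω ⊆ C°` is made of unit vectors, `0 ≤ -h_K ≤ d` on `ω`, which bounds the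
integral by `μ(ω) dᵖ`; finally `e^{-d²/2} ≤ 2n√n e^{-d²/(2n)}`. -/

open ProbabilityTheory

section StdGaussian

variable {E : Type*} [NormedAddCommGroup E] [InnerProductSpace ℝ E]

variable (E) in
noncomputable def stdGaussianDensity (x : E) : ℝ :=
  (2 * Real.pi) ^ (-(Module.finrank ℝ E : ℝ) / 2) * Real.exp (-‖x‖ ^ 2 / 2)

lemma stdGaussianDensity_nonneg (x : E) : 0 ≤ stdGaussianDensity E x := by
  unfold stdGaussianDensity; positivity

variable [FiniteDimensional ℝ E] [MeasurableSpace E] [BorelSpace E]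

lemma integrable_stdGaussianDensity : Integrable (stdGaussianDensity E) := by
  have h := (GaussianFourier.integrable_cexp_neg_mul_sq_norm_add (V := E)
    (b := 1 / 2) (by norm_num) 0 0).norm
  refine (h.congr (Eventually.of_forall fun x => ?_)).const_mul _
  simp only [Complex.norm_exp]
  congr 1
  simp [← Complex.ofReal_pow]
  ring

lemma stdGaussian_eq_withDensity :
    stdGaussian E = volume.withDensity fun x => ENNReal.ofReal (stdGaussianDensity E x) := by
  have : IsFiniteMeasure (volume.withDensity fun x => ENNReal.ofReal (stdGaussianDensity E x)) :=
    isFiniteMeasure_withDensity_ofReal integrable_stdGaussianDensity.2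
  refine Measure.ext_of_charFun (funext fun t => ?_)
  have hmeas : Measurable (stdGaussianDensity E) := by unfold stdGaussianDensity; fun_prop
  rw [charFun_stdGaussian, charFun_apply, integral_withDensity_eq_integral_toReal_smul₀
    hmeas.ennreal_ofReal.aemeasurable (Eventually.of_forall fun _ => ENNReal.ofReal_lt_top)]
  set c : ℝ := (2 * Real.pi) ^ (-(Module.finrank ℝ E : ℝ) / 2)
  have hc : (c : ℂ) * (Real.pi / (1 / 2) : ℂ) ^ (Module.finrank ℝ E / 2 : ℂ) = 1 := by
    have h2pi : (0 : ℝ) ≤ 2 * Real.pi := by positivity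
    simp only [c]
    rw [show (Real.pi / (1 / 2) : ℂ) = ((2 * Real.pi : ℝ) : ℂ) by push_cast; ring,
      show (Module.finrank ℝ E / 2 : ℂ) = ((Module.finrank ℝ E / 2 : ℝ) : ℂ) by push_cast; rfl,
      ← Complex.ofReal_cpow h2pi, ← Complex.ofReal_mul, neg_div, Real.rpow_neg h2pi,
      inv_mul_cancel₀ (by positivity), Complex.ofReal_one]
  calc Complex.exp (-‖t‖ ^ 2 / 2)
      = c * ((Real.pi / (1 / 2) : ℂ) ^ (Module.finrank ℝ E / 2 : ℂ) *
          Complex.exp (Complex.I ^ 2 * ‖t‖ ^ 2 / (4 * (1 / 2)))) := by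
        rw [← mul_assoc, hc, one_mul, Complex.I_sq]
        ring_nf
    _ = c * ∫ x : E, Complex.exp (-(1 / 2) * ‖x‖ ^ 2 + Complex.I * ⟪t, x⟫) := by
        rw [GaussianFourier.integral_cexp_neg_mul_sq_norm_add (by norm_num)]
    _ = _ := by
        rw [← integral_const_mul]
        congr 1 with x
        rw [ENNReal.toReal_ofReal (stdGaussianDensity_nonneg x), Complex.real_smul,
          stdGaussianDensity, Complex.ofReal_mul, Complex.ofReal_exp, mul_assoc,
          ← Complex.exp_add, real_inner_comm]
        push_cast
        ring_nf
        simp only [c]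
        ring_nf

lemma stdGaussian_real_eq_setIntegral (A : Set E) :
    (stdGaussian E).real A = ∫ x in A, stdGaussianDensity E x := by
  rw [stdGaussian_eq_withDensity, measureReal_def, withDensity_apply' _ A,
    ← ofReal_integral_eq_lintegral_ofReal integrable_stdGaussianDensity.integrableOn
      (Eventually.of_forall stdGaussianDensity_nonneg),
    ENNReal.toReal_ofReal (integral_nonneg stdGaussianDensity_nonneg)]

lemma stdGaussian_map_inner {u : E} (hu : ‖u‖ = 1) :
    (stdGaussian E).map (fun x => ⟪u, x⟫) = gaussianReal 0 1 := by
  have h := IsGaussian.map_eq_gaussianReal (μ := stdGaussian E) (innerSL ℝ u)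
  rw [integral_strongDual_stdGaussian, variance_dual_stdGaussian, innerSL_apply_norm, hu] at h
  simpa using h

lemma stdGaussian_real_halfspace {u : E} (hu : ‖u‖ = 1) (d : ℝ) :
    (stdGaussian E).real {x | d ≤ ⟪u, x⟫} = (gaussianReal 0 1).real (Ici d) := by
  rw [← stdGaussian_map_inner hu, map_measureReal_apply (by fun_prop) measurableSet_Ici]
  rfl

end StdGaussian

lemma gaussianReal_real_Ici_le {d : ℝ} (hd : 0 < d) :
    (gaussianReal 0 1).real (Ici d) ≤ Real.exp (-d ^ 2 / 2) / (Real.sqrt (2 * Real.pi) * d) := by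
  -- the tangent line of `s ↦ s² / 2` at `d`
  have hexp (x : ℝ) : Real.exp (-x ^ 2 / 2) ≤ Real.exp (d ^ 2 / 2) * Real.exp (-d * x) := by
    rw [← Real.exp_add, Real.exp_le_exp]
    nlinarith [sq_nonneg (x - d)]
  have hint := integrableOn_exp_mul_Ioi (neg_lt_zero.2 hd) d
  calc (gaussianReal 0 1).real (Ici d)
      = ∫ x in Ioi d, gaussianPDFReal 0 1 x := by
        rw [measureReal_def, gaussianReal_apply_eq_integral _ one_ne_zero,
          ENNReal.toReal_ofReal (setIntegral_nonneg measurableSet_Ici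
            fun x _ => gaussianPDFReal_nonneg 0 1 x), integral_Ici_eq_integral_Ioi]
    _ ≤ ∫ x in Ioi d,
          (Real.sqrt (2 * Real.pi))⁻¹ * (Real.exp (d ^ 2 / 2) * Real.exp (-d * x)) := by
        refine setIntegral_mono (integrable_gaussianPDFReal 0 1).integrableOn
          ((hint.const_mul _).const_mul _) fun x => ?_
        simp only [gaussianPDFReal, NNReal.coe_one, mul_one, sub_zero]
        gcongr
        exact hexp x
    _ = Real.exp (-d ^ 2 / 2) / (Real.sqrt (2 * Real.pi) * d) := by
        rw [integral_const_mul, integral_const_mul, integral_exp_mul_Ioi (neg_lt_zero.2 hd),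
          neg_div_neg_eq, ← mul_div_assoc, ← Real.exp_add,
          show d ^ 2 / 2 + -d * d = -d ^ 2 / 2 by ring]
        field_simp

lemma Convex.subset_halfspace_infDist {F : Type*} [NormedAddCommGroup F] [InnerProductSpace ℝ F]
    [ProperSpace F] {K : Set F} (hconv : Convex ℝ K) (hcl : IsClosed K) (hne : K.Nonempty)
    (hd : 0 < infDist 0 K) : ∃ u : F, ‖u‖ = 1 ∧ K ⊆ {x | infDist 0 K ≤ ⟪u, x⟫} := by
  obtain ⟨x₀, hx₀K, hx₀⟩ := hcl.exists_infDist_eq_dist hne (0 : F)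
  have hmin : ‖0 - x₀‖ = ⨅ w : K, ‖0 - (w : F)‖ := by
    simpa only [zero_sub, norm_neg, dist_zero_left, infDist_eq_iInf] using hx₀.symm
  set d := infDist 0 K
  have hx₀norm : ‖x₀‖ = d := by rw [hx₀, dist_zero_left]
  have hproj := (norm_eq_iInf_iff_real_inner_le_zero hconv hx₀K).1 hmin
  refine ⟨d⁻¹ • x₀, by rw [norm_smul, hx₀norm, norm_inv, Real.norm_of_nonneg hd.le,
    inv_mul_cancel₀ hd.ne'], fun x hx => ?_⟩
  have h := hproj x hx
  rw [zero_sub, inner_neg_left, inner_sub_right, real_inner_self_eq_norm_sq, hx₀norm] at h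
  change d ≤ ⟪d⁻¹ • x₀, x⟫
  rw [real_inner_smul_left, le_inv_mul_iff₀ hd]
  nlinarith

lemma gaussianMeasure_eq_stdGaussian_real (n : ℕ) (A : Set (En n)) :
    gaussianMeasure n A = (stdGaussian (En n)).real A := by
  simp only [stdGaussian_real_eq_setIntegral, stdGaussianDensity]
  rw [integral_const_mul, finrank_euclideanSpace, Fintype.card_fin]
  rfl

lemma gaussianMeasure_le_of_infDist_pos {n : ℕ} {K : Set (En n)} (hconv : Convex ℝ K)
    (hcl : IsClosed K) (hne : K.Nonempty) (hd : 0 < infDist 0 K) :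
    gaussianMeasure n K ≤
      Real.exp (-infDist 0 K ^ 2 / 2) / (Real.sqrt (2 * Real.pi) * infDist 0 K) := by
  obtain ⟨u, hu, hKu⟩ := hconv.subset_halfspace_infDist hcl hne hd
  rw [gaussianMeasure_eq_stdGaussian_real]
  calc (stdGaussian (En n)).real K ≤ (stdGaussian (En n)).real {x | infDist 0 K ≤ ⟪u, x⟫} :=
        measureReal_mono hKu
    _ ≤ _ := by
        rw [stdGaussian_real_halfspace hu]
        exact gaussianReal_real_Ici_le hd

lemma IsPseudoCone.subset_recessionCone {n : ℕ} {K : Set (En n)} (hK : IsPseudoCone K) :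
    K ⊆ recessionCone K := by
  obtain ⟨-, -, hconv, -, hscale⟩ := hK
  intro x hx y hy
  refine hscale 2 one_le_two ⟨(1 / 2 : ℝ) • y + (1 / 2 : ℝ) • x,
    hconv hy hx (by norm_num) (by norm_num) (by norm_num), ?_⟩
  simp only [smul_add, smul_smul]
  norm_num

lemma suppFn_nonpos {n : ℕ} {C K : Set (En n)} (hKC : K ⊆ C) {u : En n}
    (hu : u ∈ polarCone C) : suppFn K u ≤ 0 := by
  refine Real.sSup_le ?_ le_rfl
  rintro _ ⟨x, hx, rfl⟩
  exact (real_inner_comm u x).le.trans (hu x (hKC hx))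

lemma neg_suppFn_le_infDist {n : ℕ} {C K : Set (En n)} (hKC : K ⊆ C) (hne : K.Nonempty)
    {u : En n} (hu : u ∈ polarCone C) (hu1 : ‖u‖ = 1) : -suppFn K u ≤ infDist 0 K := by
  have hbdd : BddAbove ((fun x => ⟪x, u⟫) '' K) := by
    refine ⟨0, ?_⟩
    rintro _ ⟨x, hx, rfl⟩
    exact (real_inner_comm u x).le.trans (hu x (hKC hx))
  refine (le_infDist hne).2 fun x hx => ?_
  have hx' : ⟪x, u⟫ ≤ suppFn K u := le_csSup hbdd ⟨x, hx, rfl⟩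
  have hcs := neg_le_of_abs_le (abs_real_inner_le_norm x u)
  rw [hu1, mul_one] at hcs
  rw [dist_zero_left]
  linarith

lemma norm_setIntegral_neg_suppFn_rpow_le {n : ℕ} {C K ω : Set (En n)} (hKC : K ⊆ C)
    (hne : K.Nonempty) (hωΩ : ω ⊆ OmegaSet C) (μ : Measure (En n)) [IsFiniteMeasure μ]
    {p : ℝ} (hp : 0 ≤ p) :
    ‖∫ u in ω, (-suppFn K u) ^ p ∂μ‖ ≤ infDist 0 K ^ p * μ.real ω := by
  refine norm_setIntegral_le_of_norm_le_const (measure_lt_top μ ω) fun u hu => ?_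
  have hpol : u ∈ polarCone C := interior_subset (hωΩ hu).2
  have hh0 : 0 ≤ -suppFn K u := neg_nonneg.2 (suppFn_nonpos hKC hpol)
  rw [Real.norm_of_nonneg (Real.rpow_nonneg hh0 p)]
  exact Real.rpow_le_rpow hh0 (neg_suppFn_le_infDist hKC hne hpol
    (mem_sphere_zero_iff_norm.1 (hωΩ hu).1)) hp

lemma exp_neg_sq_div_two_le {n d : ℝ} (hn : 1 ≤ n) :
    Real.exp (-d ^ 2 / 2) ≤ 2 * n * Real.sqrt n * Real.exp (-d ^ 2 / (2 * n)) := by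
  have hexp : Real.exp (-d ^ 2 / 2) ≤ Real.exp (-d ^ 2 / (2 * n)) := by
    rw [Real.exp_le_exp, neg_div, neg_div, neg_le_neg_iff]
    exact div_le_div_of_nonneg_left (sq_nonneg d) two_pos (by linarith)
  have hsqrt : 1 ≤ Real.sqrt n := Real.one_le_sqrt.2 hn
  calc Real.exp (-d ^ 2 / 2) ≤ 1 * Real.exp (-d ^ 2 / (2 * n)) := by rwa [one_mul]
    _ ≤ 2 * n * Real.sqrt n * Real.exp (-d ^ 2 / (2 * n)) := by
        gcongr
        nlinarith

theorem I_mu_upper_estimate_general {n : ℕ} (hn : 1 ≤ n) (C : Set (En n))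
    (ω : Set (En n)) (hωΩ : ω ⊆ OmegaSet C)
    (μ : Measure (En n)) [IsFiniteMeasure μ]
    (p : ℝ) (hp : 0 < p)
    (K : Set (En n)) (hK : IsCPseudoCone C K)
    (d : ℝ) (hd : d = Metric.infDist 0 K) (hd0 : 0 < d) :
    gaussianMeasure n K * ∫ u in ω, (-suppFn K u) ^ p ∂μ ≤
      2 * n * Real.sqrt n / (Real.sqrt (2 * Real.pi) * d) * Real.exp (-d ^ 2 / (2 * n)) *
        (μ ω).toReal * d ^ p := by
  obtain ⟨hKpc, hrec⟩ := hK
  have hKC : K ⊆ C := hrec ▸ hKpc.subset_recessionCone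
  obtain ⟨hne, hcl, hconv, -, -⟩ := hKpc
  have hγ := gaussianMeasure_le_of_infDist_pos hconv hcl hne (hd ▸ hd0)
  have hI := norm_setIntegral_neg_suppFn_rpow_le hKC hne hωΩ μ hp.le
  rw [← hd] at hγ hI
  calc gaussianMeasure n K * ∫ u in ω, (-suppFn K u) ^ p ∂μ
      ≤ gaussianMeasure n K * (d ^ p * μ.real ω) := by
        gcongr
        · rw [gaussianMeasure_eq_stdGaussian_real]; exact measureReal_nonneg
        · exact (Real.le_norm_self _).trans hI
    _ ≤ Real.exp (-d ^ 2 / 2) / (Real.sqrt (2 * Real.pi) * d) * (d ^ p * μ.real ω) := by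
        gcongr
    _ ≤ 2 * n * Real.sqrt n * Real.exp (-d ^ 2 / (2 * n)) / (Real.sqrt (2 * Real.pi) * d) *
          (d ^ p * μ.real ω) := by
        gcongr
        exact exp_neg_sq_div_two_le (by exact_mod_cast hn)
    _ = _ := by rw [measureReal_def]; ring

/-- For `p > 0`, a finite Borel measure `μ` on a nonempty compact `ω ⊆ Ω`, and a
`C`-pseudo-cone `K` with `d = dist(0,K) > 0`:
`γⁿ(K) ∫_ω (-h_K)^p dμ ≤ (2n√n/(√(2π) d)) e^{-d²/(2n)} μ(ω) d^p`. -/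
theorem I_mu_upper_estimate {n : ℕ} (hn : 1 ≤ n) (C : Set (En n)) (hC : IsPointedCone C)
    (ω : Set (En n)) (hω : ω.Nonempty) (hωc : IsCompact ω) (hωΩ : ω ⊆ OmegaSet C)
    (μ : Measure (En n)) [IsFiniteMeasure μ] (hμsupp : μ ωᶜ = 0)
    (p : ℝ) (hp : 0 < p)
    (K : Set (En n)) (hK : IsCPseudoCone C K)
    (d : ℝ) (hd : d = Metric.infDist 0 K) (hd0 : 0 < d) :
    gaussianMeasure n K * ∫ u in ω, (-suppFn K u) ^ p ∂μ ≤
      2 * n * Real.sqrt n / (Real.sqrt (2 * Real.pi) * d) * Real.exp (-d ^ 2 / (2 * n)) *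
        (μ ω).toReal * d ^ p :=
  I_mu_upper_estimate_general hn C ω hωΩ μ p hp K hK d hd hd0
end

section
/- Let C ⊆ ℝⁿ be a pointed n-dimensional closed convex cone. Then the set A = ⋂_{u ∈ S^{n-1} ∩ C°} {x ∈ ℝⁿ : ⟨x,u⟩ ≤ −1} has strictly positive Gaussian measure: γⁿ(A) > 0. -/
open MeasureTheory Metric Set Filter
open scoped RealInnerProductSpace Pointwise Topology ENNReal

/-!
Since `C` has interior, it contains a closed ball `closedBall z r` with `r > 0`. Every unit vector
`u ∈ C°` is nonpositive on that ball, so `⟪z, u⟫ ≤ -r`. Hence the translate by `(2 / r) • z` of the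
open unit ball lies in every half-space `{x | ⟪x, u⟫ ≤ -1}`, so `A` has positive Lebesgue measure,
and the Gaussian density is positive everywhere.
-/

section InnerProductSpace

variable {V : Type*} [NormedAddCommGroup V] [InnerProductSpace ℝ V]

theorem integrable_exp_neg_sq_norm_div_two [FiniteDimensional ℝ V] [MeasurableSpace V]
    [BorelSpace V] : Integrable (fun x : V => Real.exp (-‖x‖ ^ 2 / 2)) := by
  convert (GaussianFourier.integrable_cexp_neg_mul_sq_norm_add (V := V) (b := 1 / 2)
    (by norm_num) 0 0).norm using 2 with x
  rw [Complex.norm_exp]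
  norm_num [div_eq_inv_mul]
  norm_cast

theorem inner_add_mul_norm_nonpos_of_closedBall {u z : V} {r : ℝ} (hr : 0 ≤ r)
    (h : ∀ y ∈ closedBall z r, ⟪u, y⟫ ≤ 0) : ⟪u, z⟫ + r * ‖u‖ ≤ 0 := by
  rcases eq_or_ne u 0 with rfl | hu
  · simp
  have hnorm : ‖u‖ ≠ 0 := norm_ne_zero_iff.2 hu
  have hmem : z + (r / ‖u‖) • u ∈ closedBall z r := by
    rw [mem_closedBall, dist_eq_norm, add_sub_cancel_left, norm_smul, Real.norm_eq_abs,
      abs_of_nonneg (by positivity), div_mul_cancel₀ r hnorm]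
  have hsq : r / ‖u‖ * ‖u‖ ^ 2 = r * ‖u‖ := by field_simp
  simpa [inner_add_right, real_inner_smul_right, real_inner_self_eq_norm_sq, hsq] using h _ hmem

end InnerProductSpace

theorem ball_subset_iInter_halfspace_of_closedBall_subset {n : ℕ} {C : Set (En n)} {z : En n}
    {r : ℝ} (hr : 0 < r) (hball : closedBall z r ⊆ C) :
    ball ((2 / r) • z) 1 ⊆
      ⋂ u ∈ sphere (0 : En n) 1 ∩ polarCone C, {x : En n | ⟪x, u⟫ ≤ -1} := by
  intro x hx
  simp only [mem_iInter, mem_ofPred_eq]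
  rintro u ⟨hu, hpolar⟩
  have hunit : ‖u‖ = 1 := by simpa using hu
  have hcenter : ⟪u, z⟫ ≤ -r := by
    have := inner_add_mul_norm_nonpos_of_closedBall hr.le fun y hy => hpolar y (hball hy)
    rw [hunit, mul_one] at this
    linarith
  have hoffset : ⟪u, x - (2 / r) • z⟫ ≤ 1 := by
    calc ⟪u, x - (2 / r) • z⟫ ≤ ‖u‖ * ‖x - (2 / r) • z‖ := real_inner_le_norm _ _
      _ ≤ 1 := by rw [hunit, one_mul, ← dist_eq_norm]; exact (mem_ball.1 hx).le
  have hscaled : (2 / r) * ⟪u, z⟫ ≤ -2 := by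
    calc (2 / r) * ⟪u, z⟫ ≤ (2 / r) * -r := by gcongr
      _ = -2 := by field_simp
  rw [inner_sub_right, real_inner_smul_right] at hoffset
  rw [real_inner_comm]
  linarith

theorem gaussianMeasure_pos_of_volume_pos {n : ℕ} {s : Set (En n)} (hs : 0 < volume s) :
    0 < gaussianMeasure n s := by
  have hsupport : Function.support (fun x : En n => Real.exp (-‖x‖ ^ 2 / 2)) = univ :=
    eq_univ_of_forall fun x => (Real.exp_pos _).ne'
  have hintegral : 0 < ∫ x in s, Real.exp (-‖x‖ ^ 2 / 2) := by
    rw [setIntegral_pos_iff_support_of_nonneg_ae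
      (ae_of_all _ fun x => (Real.exp_pos _).le)
      integrable_exp_neg_sq_norm_div_two.integrableOn, hsupport, univ_inter]
    exact hs
  exact mul_pos (Real.rpow_pos_of_pos (by positivity) _) hintegral

theorem gaussianMeasure_A_pos_general {n : ℕ} (C : Set (En n)) (hC : IsPointedCone C) :
    0 < gaussianMeasure n
      (⋂ u ∈ sphere (0 : En n) 1 ∩ polarCone C, {x : En n | ⟪x, u⟫ ≤ -1}) := by
  obtain ⟨z, hz⟩ := hC.2.2.2.1
  obtain ⟨r, hr, hball⟩ :=
    nhds_basis_closedBall.mem_iff.1 (mem_interior_iff_mem_nhds.1 hz)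
  apply gaussianMeasure_pos_of_volume_pos
  calc (0 : ENNReal) < volume (ball ((2 / r) • z) 1) := measure_ball_pos _ _ one_pos
    _ ≤ _ := measure_mono (ball_subset_iInter_halfspace_of_closedBall_subset hr hball)

/-- For a pointed `n`-dimensional closed convex cone `C`, the set
`A = ⋂_{u ∈ S^{n-1} ∩ C°} {x : ⟨x,u⟩ ≤ -1}` has positive Gaussian measure. -/
theorem gaussianMeasure_A_pos {n : ℕ} (hn : 1 ≤ n) (C : Set (En n)) (hC : IsPointedCone C) :
    0 < gaussianMeasure n
      (⋂ u ∈ sphere (0 : En n) 1 ∩ polarCone C, {x : En n | ⟪x, u⟫ ≤ -1}) :=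
  gaussianMeasure_A_pos_general C hC
end

section
/- Let C ⊆ ℝⁿ be a pointed n-dimensional closed convex cone (n ≥ 2), let e ∈ S^{n-1} be such that −e ∈ int C°, and let p < n be a real number. Define s(t) = ∫_{C ∩ {x : ⟨x,e⟩ = t}} e^{-‖y‖²/2} dℋ^{n-1}(y) for t > 0. Then there exist real numbers t₁, t₂ with 0 < t₁ < t₂ such that t₁^{1-p} s(t₁) = t₂^{1-p} s(t₂) > 0; in particular, the function t ↦ t^{1-p} s(t) is not injective on (0,∞). -/
open MeasureTheory Metric Set Filter
open scoped RealInnerProductSpace Pointwise Topology ENNReal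

/-!
Since `C` is a cone, its slice at height `t > 0` is `t • A` with `A = C ∩ {⟪x, e⟫ = 1}`, so by the
scaling of Hausdorff measure `t ^ (1 - p) * s t = t ^ (n - p) * φ t`, where
`φ t = ∫_A exp (-‖t • y‖² / 2) dℋⁿ⁻¹`. The hyperplane `{⟪x, e⟫ = 1}` is an isometric copy of
`(ℝ ∙ e)ᗮ`, on which `ℋⁿ⁻¹` is a Haar measure. As `-e ∈ int C°` gives `ε ‖x‖ ≤ ⟪x, e⟫` on `C`,
the base `A` is bounded; it also has nonempty relative interior, so `0 < ℋⁿ⁻¹ A < ∞`. Hence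
`t ^ (n - p) * φ t` is continuous and positive on `(0, ∞)`, and since `n - p > 0` and `‖y‖ ≥ 1`
on `A` it tends to `0` at both ends; by the intermediate value theorem it takes some positive
value twice.
-/

open Module
open scoped NNReal

section Scaling

variable {E F : Type*} [NormedAddCommGroup E] [NormedSpace ℝ E] [MeasurableSpace E] [BorelSpace E]
  [NormedAddCommGroup F] [NormedSpace ℝ F] {d : ℝ}

theorem measurePreserving_const_smul_hausdorffMeasure (hd : 0 ≤ d) {r : ℝ} (hr : r ≠ 0) :
    MeasurePreserving (r • · : E → E) ((‖r‖₊ ^ d : ℝ≥0) • μH[d]) μH[d] where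
  measurable := measurable_const_smul r
  map_eq := by
    ext s hs
    rw [Measure.map_apply (measurable_const_smul r) hs, Measure.smul_apply, preimage_smul₀ hr,
      Measure.hausdorffMeasure_smul₀ hd (inv_ne_zero hr), smul_smul, nnnorm_inv,
      ← NNReal.mul_rpow, mul_inv_cancel₀ (by simpa using hr), NNReal.one_rpow, one_smul]

theorem setIntegral_smul_set_hausdorffMeasure (hd : 0 ≤ d) {r : ℝ} (hr : r ≠ 0) (s : Set E)
    (f : E → F) : ∫ y in r • s, f y ∂μH[d] = |r| ^ d • ∫ y in s, f (r • y) ∂μH[d] := by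
  rw [← image_smul, (measurePreserving_const_smul_hausdorffMeasure hd hr).setIntegral_image_emb
    (measurableEmbedding_const_smul₀ hr), Measure.restrict_smul, integral_smul_nnreal_measure]
  simp [NNReal.smul_def]

end Scaling

section Hyperplane

variable {E : Type*} [NormedAddCommGroup E] [InnerProductSpace ℝ E] {e : E}

theorem range_add_orthogonal_span_singleton (he : ‖e‖ = 1) :
    range (fun w : (ℝ ∙ e)ᗮ => e + (w : E)) = {x | ⟪x, e⟫ = 1} := by
  have hee : ⟪e, e⟫ = 1 := by rw [real_inner_self_eq_norm_sq, he, one_pow]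
  ext x
  constructor
  · rintro ⟨w, rfl⟩
    rw [mem_ofPred_eq, inner_add_left, hee,
      Submodule.mem_orthogonal_singleton_iff_inner_left.1 w.2, add_zero]
  · intro hx
    refine ⟨⟨x - e, ?_⟩, add_sub_cancel _ _⟩
    rw [Submodule.mem_orthogonal_singleton_iff_inner_right, inner_sub_right, real_inner_comm,
      hx, hee, sub_self]

theorem isometry_const_add_coe (e : E) (K : Submodule ℝ E) : Isometry fun w : K => e + (w : E) :=
  (isometry_add_left e).comp isometry_subtype_coe

variable [FiniteDimensional ℝ E] [MeasurableSpace E] [BorelSpace E]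

theorem hausdorffMeasure_inter_hyperplane (he : ‖e‖ = 1) (A : Set E) :
    μH[(finrank ℝ E : ℝ) - 1] (A ∩ {x | ⟪x, e⟫ = 1}) =
      μH[finrank ℝ (ℝ ∙ e)ᗮ] ((fun w : (ℝ ∙ e)ᗮ => e + (w : E)) ⁻¹' A) := by
  have hdim : (finrank ℝ (ℝ ∙ e)ᗮ : ℝ) = finrank ℝ E - 1 := by
    have := (ℝ ∙ e).finrank_add_finrank_orthogonal
    rw [finrank_span_singleton (norm_ne_zero_iff.1 (he ▸ one_ne_zero))] at this
    rw [← this]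
    push_cast
    ring
  rw [(isometry_const_add_coe e _).hausdorffMeasure_preimage (Or.inl (Nat.cast_nonneg _)),
    range_add_orthogonal_span_singleton he, hdim]

theorem hausdorffMeasure_inter_hyperplane_lt_top (he : ‖e‖ = 1) {A : Set E}
    (hA : Bornology.IsBounded (A ∩ {x | ⟪x, e⟫ = 1})) :
    μH[(finrank ℝ E : ℝ) - 1] (A ∩ {x | ⟪x, e⟫ = 1}) < ⊤ := by
  rw [← inter_self {x | ⟪x, e⟫ = 1}, ← inter_assoc, hausdorffMeasure_inter_hyperplane he]
  exact ((isometry_const_add_coe e _).antilipschitz.isBounded_preimage hA).measure_lt_top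

theorem hausdorffMeasure_inter_hyperplane_pos (he : ‖e‖ = 1) {A : Set E}
    (hA : (interior A ∩ {x | ⟪x, e⟫ = 1}).Nonempty) :
    0 < μH[(finrank ℝ E : ℝ) - 1] (A ∩ {x | ⟪x, e⟫ = 1}) := by
  obtain ⟨x, hxA, hx⟩ := hA
  rw [← range_add_orthogonal_span_singleton he] at hx
  obtain ⟨w, rfl⟩ := hx
  have hopen : IsOpen ((fun w : (ℝ ∙ e)ᗮ => e + (w : E)) ⁻¹' interior A) :=
    isOpen_interior.preimage (by fun_prop)
  rw [hausdorffMeasure_inter_hyperplane he]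
  exact (hopen.measure_pos _ ⟨w, hxA⟩).trans_le
    (measure_mono (preimage_mono interior_subset))

end Hyperplane

section Cone

variable {E : Type*} [NormedAddCommGroup E] [InnerProductSpace ℝ E] {C : Set E} {e : E}

theorem inter_inner_eq_smul_inter_inner_eq_one
    (hC : ∀ x ∈ C, ∀ c : ℝ, 0 ≤ c → c • x ∈ C) {t : ℝ} (ht : 0 < t) :
    C ∩ {x | ⟪x, e⟫ = t} = t • (C ∩ {x | ⟪x, e⟫ = 1}) := by
  ext x
  rw [mem_smul_set_iff_inv_smul_mem₀ ht.ne']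
  simp only [mem_inter_iff, mem_ofPred_eq, real_inner_smul_left]
  constructor
  · rintro ⟨hx, rfl⟩
    exact ⟨hC x hx _ (inv_nonneg.2 ht.le), inv_mul_cancel₀ ht.ne'⟩
  · rintro ⟨hx, hxe⟩
    refine ⟨by simpa [smul_smul, ht.ne'] using hC _ hx t ht.le, ?_⟩
    field_simp at hxe
    exact hxe

theorem setIntegral_inter_inner_eq_hausdorffMeasure [MeasurableSpace E] [BorelSpace E]
    {F : Type*} [NormedAddCommGroup F] [NormedSpace ℝ F]
    (hC : ∀ x ∈ C, ∀ c : ℝ, 0 ≤ c → c • x ∈ C) {d : ℝ} (hd : 0 ≤ d) {t : ℝ} (ht : 0 < t)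
    (f : E → F) :
    ∫ y in C ∩ {x | ⟪x, e⟫ = t}, f y ∂μH[d] =
      t ^ d • ∫ y in C ∩ {x | ⟪x, e⟫ = 1}, f (t • y) ∂μH[d] := by
  rw [inter_inner_eq_smul_inter_inner_eq_one hC ht,
    setIntegral_smul_set_hausdorffMeasure hd ht.ne', abs_of_pos ht]

theorem inter_inner_eq_one_subset_closedBall {ε : ℝ} (hε : 0 < ε)
    (hcoer : ∀ x ∈ C, ε * ‖x‖ ≤ ⟪x, e⟫) :
    C ∩ {x | ⟪x, e⟫ = 1} ⊆ closedBall 0 ε⁻¹ := by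
  rintro x ⟨hxC, hxe⟩
  rw [mem_closedBall_zero_iff, ← one_div, le_div_iff₀' hε]
  exact (hcoer x hxC).trans_eq hxe

theorem inner_pos_of_mem_interior (he : ‖e‖ = 1) (hcoer : ∀ x ∈ C, 0 ≤ ⟪x, e⟫) {x : E}
    (hx : x ∈ interior C) : 0 < ⟪x, e⟫ := by
  obtain ⟨r, hr, hball⟩ := Metric.isOpen_iff.1 isOpen_interior x hx
  have hmem : x - (r / 2) • e ∈ C := interior_subset <| hball <| by
    rw [mem_ball, dist_eq_norm, sub_sub_cancel_left, norm_neg, norm_smul, he, mul_one,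
      Real.norm_of_nonneg (by positivity)]
    linarith
  have := hcoer _ hmem
  rw [inner_sub_left, real_inner_smul_left, real_inner_self_eq_norm_sq, he] at this
  linarith

theorem interior_inter_inner_eq_one_nonempty (he : ‖e‖ = 1)
    (hC : ∀ x ∈ C, ∀ c : ℝ, 0 ≤ c → c • x ∈ C) (hcoer : ∀ x ∈ C, 0 ≤ ⟪x, e⟫)
    (hint : (interior C).Nonempty) : (interior C ∩ {x | ⟪x, e⟫ = 1}).Nonempty := by
  obtain ⟨x, hx⟩ := hint
  have hτ := inner_pos_of_mem_interior he hcoer hx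
  refine ⟨⟪x, e⟫⁻¹ • x, ?_, ?_⟩
  · have hsub : ⟪x, e⟫⁻¹ • C ⊆ C := by
      rintro _ ⟨y, hy, rfl⟩
      exact hC y hy _ (inv_nonneg.2 hτ.le)
    refine interior_mono hsub ?_
    rw [interior_smul₀ (inv_ne_zero hτ.ne')]
    exact smul_mem_smul_set hx
  · rw [mem_ofPred_eq, real_inner_smul_left, inv_mul_cancel₀ hτ.ne']

end Cone

theorem exists_mul_norm_le_inner_of_neg_mem_interior_polarCone {n : ℕ} {C : Set (En n)}
    {e : En n} (h : -e ∈ interior (polarCone C)) :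
    ∃ ε > 0, ∀ x ∈ C, ε * ‖x‖ ≤ ⟪x, e⟫ := by
  obtain ⟨δ, hδ, hball⟩ := Metric.mem_nhds_iff.1 (mem_interior_iff_mem_nhds.1 h)
  refine ⟨δ / 2, by positivity, fun x hx => ?_⟩
  rcases eq_or_ne x 0 with rfl | hx0
  · simp
  have hnx : 0 < ‖x‖ := norm_pos_iff.2 hx0
  have hu : -e + (δ / 2 / ‖x‖) • x ∈ polarCone C := hball <| by
    rw [mem_ball, dist_eq_norm, add_sub_cancel_left, norm_smul, Real.norm_of_nonneg (by positivity),
      div_mul_cancel₀ _ hnx.ne']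
    linarith
  have := hu x hx
  rw [inner_add_left, inner_neg_left, real_inner_smul_left, real_inner_self_eq_norm_sq,
    real_inner_comm] at this
  field_simp at this
  linarith

theorem hausdorffMeasure_inter_inner_eq_one_pos_and_lt_top {n : ℕ} {C : Set (En n)} {e : En n}
    (he : ‖e‖ = 1) (hC : ∀ x ∈ C, ∀ c : ℝ, 0 ≤ c → c • x ∈ C) (hint : (interior C).Nonempty)
    (hei : -e ∈ interior (polarCone C)) :
    0 < μH[(n : ℝ) - 1] (C ∩ {x | ⟪x, e⟫ = 1}) ∧ μH[(n : ℝ) - 1] (C ∩ {x | ⟪x, e⟫ = 1}) < ⊤ := by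
  obtain ⟨ε, hε, hcoer⟩ := exists_mul_norm_le_inner_of_neg_mem_interior_polarCone hei
  have hdim : (finrank ℝ (En n) : ℝ) = n := by rw [finrank_euclideanSpace_fin]
  refine hdim ▸ ⟨hausdorffMeasure_inter_hyperplane_pos he ?_,
    hausdorffMeasure_inter_hyperplane_lt_top he ?_⟩
  · exact interior_inter_inner_eq_one_nonempty he hC
      (fun x hx => (mul_nonneg hε.le (norm_nonneg x)).trans (hcoer x hx)) hint
  · exact isBounded_closedBall.subset (inter_inner_eq_one_subset_closedBall hε hcoer)

theorem exists_lt_eq_pos_of_tendsto_zero {G : ℝ → ℝ} (hG : ContinuousOn G (Ioi 0))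
    (h0 : Tendsto G (𝓝[>] 0) (𝓝 0)) (htop : Tendsto G atTop (𝓝 0)) {a : ℝ} (ha : 0 < a)
    (hGa : 0 < G a) : ∃ t₁ t₂, 0 < t₁ ∧ t₁ < t₂ ∧ G t₁ = G t₂ ∧ 0 < G t₁ := by
  have hc : G a / 2 < G a := half_lt_self hGa
  obtain ⟨b₁, hGb₁, hb₁⟩ :=
    ((h0.eventually (gt_mem_nhds (half_pos hGa))).and (Ioo_mem_nhdsGT ha)).exists
  obtain ⟨b₂, hGb₂, hb₂⟩ :=
    ((htop.eventually (gt_mem_nhds (half_pos hGa))).and (eventually_gt_atTop a)).exists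
  obtain ⟨t₁, ht₁, hGt₁⟩ := intermediate_value_Icc hb₁.2.le
    (hG.mono fun t ht => hb₁.1.trans_le ht.1) ⟨hGb₁.le, hc.le⟩
  obtain ⟨t₂, ht₂, hGt₂⟩ := intermediate_value_Icc' hb₂.le
    (hG.mono fun t ht => ha.trans_le ht.1) ⟨hGb₂.le, hc.le⟩
  have ht₁a : t₁ ≠ a := by rintro rfl; exact hc.ne hGt₁.symm
  exact ⟨t₁, t₂, hb₁.1.trans_le ht₁.1, (lt_of_le_of_ne ht₁.2 ht₁a).trans_le ht₂.1,
    hGt₁.trans hGt₂.symm, hGt₁ ▸ half_pos hGa⟩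

section GaussianProfile

variable {E : Type*} [NormedAddCommGroup E] [NormedSpace ℝ E] [MeasurableSpace E]
  (μ : Measure E) [IsFiniteMeasure μ]

theorem integral_exp_neg_norm_smul_sq_le (h1 : ∀ᵐ y ∂μ, 1 ≤ ‖y‖) (t : ℝ) :
    ∫ y, Real.exp (-‖t • y‖ ^ 2 / 2) ∂μ ≤ Real.exp (-t ^ 2 / 2) * μ.real univ := by
  refine (Real.le_norm_self _).trans (norm_integral_le_of_norm_le_const ?_)
  filter_upwards [h1] with y hy
  rw [Real.norm_of_nonneg (Real.exp_pos _).le, Real.exp_le_exp, norm_smul, mul_pow,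
    Real.norm_eq_abs, sq_abs]
  have : t ^ 2 ≤ t ^ 2 * ‖y‖ ^ 2 := le_mul_of_one_le_right (sq_nonneg t) (one_le_pow₀ hy)
  linarith

theorem tendsto_rpow_mul_integral_exp_neg_norm_smul_sq_atTop (h1 : ∀ᵐ y ∂μ, 1 ≤ ‖y‖) (q : ℝ) :
    Tendsto (fun t : ℝ => t ^ q * ∫ y, Real.exp (-‖t • y‖ ^ 2 / 2) ∂μ) atTop (𝓝 0) := by
  have hgauss : Tendsto (fun t : ℝ => t ^ q * Real.exp (-t ^ 2 / 2)) atTop (𝓝 0) := by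
    refine ((tendsto_rpow_abs_mul_exp_neg_mul_sq_cocompact one_half_pos q).mono_left
      atTop_le_cocompact).congr' ?_
    filter_upwards [eventually_ge_atTop 0] with t ht
    rw [abs_of_nonneg ht]
    ring_nf
  refine squeeze_zero' ?_ ?_ (by simpa using hgauss.mul_const (μ.real univ))
  · filter_upwards [eventually_ge_atTop 0] with t ht
    exact mul_nonneg (Real.rpow_nonneg ht q) (integral_nonneg fun y => (Real.exp_pos _).le)
  · filter_upwards [eventually_ge_atTop 0] with t ht
    rw [mul_assoc]
    exact mul_le_mul_of_nonneg_left (integral_exp_neg_norm_smul_sq_le μ h1 t)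
      (Real.rpow_nonneg ht q)

variable [OpensMeasurableSpace E]

theorem continuous_integral_exp_neg_norm_smul_sq :
    Continuous fun t : ℝ => ∫ y, Real.exp (-‖t • y‖ ^ 2 / 2) ∂μ := by
  refine continuous_of_dominated (bound := fun _ => 1)
    (fun t => (by fun_prop : Continuous _).aestronglyMeasurable)
    (fun t => ae_of_all _ fun y => ?_) (integrable_const 1) (ae_of_all _ fun y => by fun_prop)
  rw [Real.norm_of_nonneg (Real.exp_pos _).le, Real.exp_le_one_iff]
  have := sq_nonneg ‖t • y‖
  linarith

theorem exists_lt_rpow_mul_integral_exp_neg_norm_smul_sq_eq [NeZero μ] (h1 : ∀ᵐ y ∂μ, 1 ≤ ‖y‖)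
    {q : ℝ} (hq : 0 < q) :
    ∃ t₁ t₂ : ℝ, 0 < t₁ ∧ t₁ < t₂ ∧
      t₁ ^ q * ∫ y, Real.exp (-‖t₁ • y‖ ^ 2 / 2) ∂μ =
        t₂ ^ q * ∫ y, Real.exp (-‖t₂ • y‖ ^ 2 / 2) ∂μ ∧
      0 < t₁ ^ q * ∫ y, Real.exp (-‖t₁ • y‖ ^ 2 / 2) ∂μ := by
  have hφ := continuous_integral_exp_neg_norm_smul_sq μ
  refine exists_lt_eq_pos_of_tendsto_zero
    (fun t ht => ((Real.continuousAt_rpow_const t q (Or.inl (ne_of_gt ht))).mul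
      hφ.continuousAt).continuousWithinAt) ?_
    (tendsto_rpow_mul_integral_exp_neg_norm_smul_sq_atTop μ h1 q) one_pos ?_
  · simpa [Real.zero_rpow hq.ne'] using
      ((Real.continuousAt_rpow_const 0 q (Or.inr hq.le)).tendsto.mul
        hφ.continuousAt.tendsto).mono_left nhdsWithin_le_nhds
  · simpa using integral_exp_pos (μ := μ) (f := fun y => -‖y‖ ^ 2 / 2)
      ((integrable_const 1).mono' (by fun_prop) (ae_of_all _ fun y => by
        rw [Real.norm_of_nonneg (Real.exp_pos _).le, Real.exp_le_one_iff]
        have := sq_nonneg ‖y‖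
        linarith))

end GaussianProfile

theorem slice_density_not_injective_general {n : ℕ} (C : Set (En n))
    (hC : IsPointedCone C) (e : En n) (he : e ∈ sphere (0 : En n) 1)
    (hei : -e ∈ interior (polarCone C)) (p : ℝ) (hp : p < n) :
    (∃ t₁ t₂ : ℝ, 0 < t₁ ∧ t₁ < t₂ ∧
      t₁ ^ (1 - p) *
          (∫ y in C ∩ {x : En n | ⟪x, e⟫ = t₁}, Real.exp (-‖y‖ ^ 2 / 2) ∂(μH[(n : ℝ) - 1])) =
        t₂ ^ (1 - p) *
          (∫ y in C ∩ {x : En n | ⟪x, e⟫ = t₂}, Real.exp (-‖y‖ ^ 2 / 2) ∂(μH[(n : ℝ) - 1])) ∧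
      0 < t₁ ^ (1 - p) *
          (∫ y in C ∩ {x : En n | ⟪x, e⟫ = t₁}, Real.exp (-‖y‖ ^ 2 / 2) ∂(μH[(n : ℝ) - 1]))) ∧
    ¬ Set.InjOn
      (fun t : ℝ => t ^ (1 - p) *
        ∫ y in C ∩ {x : En n | ⟪x, e⟫ = t}, Real.exp (-‖y‖ ^ 2 / 2) ∂(μH[(n : ℝ) - 1]))
      (Set.Ioi 0) := by
  obtain ⟨hCclosed, -, hCcone, hCint, -⟩ := hC
  rw [mem_sphere_zero_iff_norm] at he
  have hn : (1 : ℝ) ≤ n := by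
    have : Nontrivial (En n) := nontrivial_of_ne e 0 (norm_ne_zero_iff.1 (he ▸ one_ne_zero))
    have := finrank_pos (R := ℝ) (M := En n)
    rw [finrank_euclideanSpace_fin] at this
    exact_mod_cast this
  set A := C ∩ {x : En n | ⟪x, e⟫ = 1}
  obtain ⟨hA_pos, hA_top⟩ :=
    hausdorffMeasure_inter_inner_eq_one_pos_and_lt_top he hCcone hCint hei
  set μ := (μH[(n : ℝ) - 1] : Measure (En n)).restrict A
  have : IsFiniteMeasure μ := isFiniteMeasure_restrict.2 hA_top.ne
  have : NeZero μ := ⟨by simpa [μ] using hA_pos.ne'⟩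
  have h1 : ∀ᵐ y ∂μ, 1 ≤ ‖y‖ := by
    refine ae_restrict_of_forall_mem
      (hCclosed.inter (isClosed_eq (by fun_prop) continuous_const)).measurableSet fun y hy => ?_
    have hye : ⟪y, e⟫ = 1 := hy.2
    simpa [hye, he] using real_inner_le_norm y e
  have hslice (t : ℝ) (ht : 0 < t) :
      t ^ (1 - p) * ∫ y in C ∩ {x : En n | ⟪x, e⟫ = t}, Real.exp (-‖y‖ ^ 2 / 2) ∂μH[(n : ℝ) - 1] =
        t ^ ((n : ℝ) - p) * ∫ y, Real.exp (-‖t • y‖ ^ 2 / 2) ∂μ := by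
    rw [setIntegral_inter_inner_eq_hausdorffMeasure hCcone (sub_nonneg.2 hn) ht, smul_eq_mul,
      ← mul_assoc, ← Real.rpow_add ht, sub_add_sub_cancel']
  obtain ⟨t₁, t₂, ht₁, ht₁₂, heq, hpos⟩ :=
    exists_lt_rpow_mul_integral_exp_neg_norm_smul_sq_eq μ h1 (sub_pos.2 hp)
  rw [← hslice t₁ ht₁, ← hslice t₂ (ht₁.trans ht₁₂)] at heq
  rw [← hslice t₁ ht₁] at hpos
  exact ⟨⟨t₁, t₂, ht₁, ht₁₂, heq, hpos⟩, fun hinj => ht₁₂.ne (hinj ht₁ (ht₁.trans ht₁₂) heq)⟩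

/-- For `p < n`, the function `t ↦ t^{1-p} s(t)`, where
`s(t) = ∫_{C ∩ {⟨x,e⟩ = t}} e^{-‖y‖²/2} dℋ^{n-1}(y)`, takes the same positive value at two
distinct points `0 < t₁ < t₂`; in particular it is not injective on `(0,∞)`. -/
theorem slice_density_not_injective {n : ℕ} (hn : 2 ≤ n) (C : Set (En n))
    (hC : IsPointedCone C) (e : En n) (he : e ∈ sphere (0 : En n) 1)
    (hei : -e ∈ interior (polarCone C)) (p : ℝ) (hp : p < n) :
    (∃ t₁ t₂ : ℝ, 0 < t₁ ∧ t₁ < t₂ ∧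
      t₁ ^ (1 - p) *
          (∫ y in C ∩ {x : En n | ⟪x, e⟫ = t₁}, Real.exp (-‖y‖ ^ 2 / 2) ∂(μH[(n : ℝ) - 1])) =
        t₂ ^ (1 - p) *
          (∫ y in C ∩ {x : En n | ⟪x, e⟫ = t₂}, Real.exp (-‖y‖ ^ 2 / 2) ∂(μH[(n : ℝ) - 1])) ∧
      0 < t₁ ^ (1 - p) *
          (∫ y in C ∩ {x : En n | ⟪x, e⟫ = t₁}, Real.exp (-‖y‖ ^ 2 / 2) ∂(μH[(n : ℝ) - 1]))) ∧
    ¬ Set.InjOn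
      (fun t : ℝ => t ^ (1 - p) *
        ∫ y in C ∩ {x : En n | ⟪x, e⟫ = t}, Real.exp (-‖y‖ ^ 2 / 2) ∂(μH[(n : ℝ) - 1]))
      (Set.Ioi 0) :=
  slice_density_not_injective_general C hC e he hei p hp
end
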